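/- Let M be an imprimitivity Hilbert C*-bimodule over commutative unital C*-algebras A and B, let wⱼ,zⱼ ∈ M with Σⱼ⟨wⱼ,zⱼ⟩_B = 1_B, and set α := Σⱼ⟨zⱼ,wⱼ⟩_A. Then α is a positive Hermitian element of A, ‖α‖ ≤ 1, and α is invertible with positive inverse of norm at most 1; consequently α = 1_A. -/

import Mathlib

/-!
Since `A` is commutative, the left inner products commute, and by imprimitivity this lets one
trade arguments: `u⟨s,v⟩_B = (α v)⟨s,u⟩_B` once `Σⱼ⟨wⱼ,zⱼ⟩_B = 1` is inserted. Pairing with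
`x := α v - v` gives `⟨x,x⟩_B² = 0`, so `α` acts as the identity on `M`. As `M` is full over
`A`, the left action is faithful, hence `α = 1`; the remaining claims are then trivial.
-/

/-- A pre-Hilbert C*-bimodule `M` over unital C*-algebras `A` (on the left) and
`B` (on the right): a left pre-Hilbert C*-module over `A` (inner product `innerL`,
`A`-linear in the first variable) and a right pre-Hilbert C*-module over `B`
(inner product `innerR`, `B`-linear in the second variable), with compatible
actions. -/
structure PreHilbertBimodule (A B M : Type*) [CStarAlgebra A] [CStarAlgebra B]
    [AddCommGroup M] [Module ℂ M] where
  lsmul : A → M → M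
  rsmul : M → B → M
  innerL : M → M → A
  innerR : M → M → B
  lsmul_dist : ∀ a x y, lsmul a (x + y) = lsmul a x + lsmul a y
  add_lsmul : ∀ a b x, lsmul (a + b) x = lsmul a x + lsmul b x
  mul_lsmul : ∀ a b x, lsmul (a * b) x = lsmul a (lsmul b x)
  one_lsmul : ∀ x, lsmul 1 x = x
  lsmul_csmul : ∀ (c : ℂ) a x, lsmul a (c • x) = c • lsmul a x
  csmul_lsmul : ∀ (c : ℂ) a x, lsmul (c • a) x = c • lsmul a x
  rsmul_dist : ∀ x y b, rsmul (x + y) b = rsmul x b + rsmul y b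
  rsmul_add : ∀ x a b, rsmul x (a + b) = rsmul x a + rsmul x b
  rsmul_mul : ∀ x a b, rsmul (rsmul x a) b = rsmul x (a * b)
  rsmul_one : ∀ x, rsmul x 1 = x
  rsmul_csmul : ∀ (c : ℂ) x b, rsmul (c • x) b = c • rsmul x b
  rsmul_calg : ∀ (c : ℂ) x b, rsmul x (c • b) = c • rsmul x b
  lsmul_rsmul : ∀ a x b, lsmul a (rsmul x b) = rsmul (lsmul a x) b
  innerR_add_right : ∀ x y z, innerR x (y + z) = innerR x y + innerR x z
  innerR_rsmul_right : ∀ x y b, innerR x (rsmul y b) = innerR x y * b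
  innerR_conj_symm : ∀ x y, innerR y x = star (innerR x y)
  innerR_csmul_right : ∀ (c : ℂ) x y, innerR x (c • y) = c • innerR x y
  innerR_self_pos : ∀ x, ∃ b, innerR x x = star b * b
  innerR_self_definite : ∀ x, innerR x x = 0 → x = 0
  innerL_add_left : ∀ x y z, innerL (x + y) z = innerL x z + innerL y z
  innerL_lsmul_left : ∀ a x y, innerL (lsmul a x) y = a * innerL x y
  innerL_conj_symm : ∀ x y, innerL y x = star (innerL x y)
  innerL_csmul_left : ∀ (c : ℂ) x y, innerL (c • x) y = c • innerL x y
  innerL_self_pos : ∀ x, ∃ a, innerL x x = star a * a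
  innerL_self_definite : ∀ x, innerL x x = 0 → x = 0
  innerR_lsmul : ∀ a x y, innerR x (lsmul a y) = innerR (lsmul (star a) x) y
  innerL_rsmul : ∀ x y b, innerL (rsmul x b) y = innerL x (rsmul y (star b))

/-- An imprimitivity (equivalence) Hilbert C*-bimodule over `A` and `B`: a
pre-Hilbert C*-bimodule that is full as a left and as a right Hilbert C*-module,
satisfies the imprimitivity condition `⟨x,y⟩_A·z = x·⟨y,z⟩_B`, and is complete
(for the common norm induced by the inner products). -/
structure ImprimitivityBimodule (A B M : Type*) [CStarAlgebra A] [CStarAlgebra B]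
    [AddCommGroup M] [Module ℂ M] extends PreHilbertBimodule A B M where
  imprimitivity : ∀ x y z, lsmul (innerL x y) z = rsmul x (innerR y z)
  fullL : closure (Submodule.span ℂ {a : A | ∃ x y : M, a = innerL x y} : Set A)
      = Set.univ
  fullR : closure (Submodule.span ℂ {b : B | ∃ x y : M, b = innerR x y} : Set B)
      = Set.univ
  complete : ∀ f : ℕ → M,
    (∀ ε > 0, ∃ N, ∀ m ≥ N, ∀ n ≥ N,
      ‖innerR (f m - f n) (f m - f n)‖ < ε) →
    ∃ x, ∀ ε > 0, ∃ N, ∀ n ≥ N, ‖innerR (f n - x) (f n - x)‖ < ε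

namespace PreHilbertBimodule

variable {A B M : Type*} [CStarAlgebra A] [CStarAlgebra B] [AddCommGroup M] [Module ℂ M]
  (H : PreHilbertBimodule A B M)

lemma sum_lsmul {ι : Type*} (s : Finset ι) (f : ι → A) (x : M) :
    H.lsmul (∑ i ∈ s, f i) x = ∑ i ∈ s, H.lsmul (f i) x :=
  map_sum (AddMonoidHom.mk' (H.lsmul · x) fun a b => H.add_lsmul a b x) f s

lemma sum_rsmul {ι : Type*} (s : Finset ι) (f : ι → M) (b : B) :
    H.rsmul (∑ i ∈ s, f i) b = ∑ i ∈ s, H.rsmul (f i) b :=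
  map_sum (AddMonoidHom.mk' (H.rsmul · b) fun x y => H.rsmul_dist x y b) f s

lemma rsmul_sum {ι : Type*} (s : Finset ι) (x : M) (f : ι → B) :
    H.rsmul x (∑ i ∈ s, f i) = ∑ i ∈ s, H.rsmul x (f i) :=
  map_sum (AddMonoidHom.mk' (H.rsmul x) (H.rsmul_add x)) f s

lemma innerR_sub_right (x y y' : M) : H.innerR x (y - y') = H.innerR x y - H.innerR x y' :=
  map_sub (AddMonoidHom.mk' (H.innerR x) (H.innerR_add_right x)) y y'

lemma eq_zero_of_innerR_self_mul_self_eq_zero {x : M}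
    (hx : H.innerR x x * H.innerR x x = 0) : x = 0 := by
  refine H.innerR_self_definite x ((CStarRing.star_mul_self_eq_zero_iff _).mp ?_)
  rwa [← H.innerR_conj_symm]

end PreHilbertBimodule

namespace ImprimitivityBimodule

variable {A B M : Type*} [AddCommGroup M] [Module ℂ M]

section

variable [CStarAlgebra A] [CStarAlgebra B] (H : ImprimitivityBimodule A B M)

lemma sum_innerL_lsmul {ι : Type*} (s : Finset ι) (w z : ι → M) (v : M) :
    H.lsmul (∑ j ∈ s, H.innerL (z j) (w j)) v = ∑ j ∈ s, H.rsmul (z j) (H.innerR (w j) v) := by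
  rw [H.sum_lsmul]
  exact Finset.sum_congr rfl fun j _ => H.imprimitivity _ _ _

lemma eq_one_of_lsmul_eq_self {a : A} (ha : ∀ v, H.lsmul a v = v) : a = 1 := by
  let L : A →L[ℂ] A := ContinuousLinearMap.mul ℂ A (a - 1)
  have hspan : Submodule.span ℂ {b : A | ∃ x y : M, b = H.innerL x y} ≤ L.ker := by
    rw [Submodule.span_le]
    rintro b ⟨x, y, rfl⟩
    change (a - 1) * H.innerL x y = 0
    rw [sub_mul, one_mul, ← H.innerL_lsmul_left, ha, sub_self]
  have hker : (Set.univ : Set A) ⊆ L.ker := by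
    rw [← H.fullL]
    exact closure_minimal hspan L.isClosed_ker
  simpa [L, sub_eq_zero] using hker (Set.mem_univ 1)

end

section Commutative

variable [CommCStarAlgebra A] [CommCStarAlgebra B] (H : ImprimitivityBimodule A B M)

/-- Imprimitivity turns `⟨u,y⟩_A ⟨w,z⟩_A = ⟨w,z⟩_A ⟨u,y⟩_A` into this identity in `M`. -/
lemma rsmul_innerR_mul_innerR_comm (u y w z v : M) :
    H.rsmul u (H.innerR y w * H.innerR z v) = H.rsmul w (H.innerR z u * H.innerR y v) := by
  have expand : ∀ u y w z : M, H.lsmul (H.innerL u y * H.innerL w z) v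
      = H.rsmul u (H.innerR y w * H.innerR z v) := fun u y w z => by
    rw [H.mul_lsmul, H.imprimitivity w z v, H.lsmul_rsmul, H.imprimitivity, H.rsmul_mul]
  rw [← expand, ← expand, mul_comm]

variable {ι : Type*} [Fintype ι] (w z : ι → M)

lemma rsmul_innerR_eq_of_sum_innerR_eq_one (hwz : ∑ j, H.innerR (w j) (z j) = 1)
    (u s v : M) :
    H.rsmul u (H.innerR s v)
      = H.rsmul (H.lsmul (∑ j, H.innerL (z j) (w j)) v) (H.innerR s u) := by
  calc H.rsmul u (H.innerR s v)
      = ∑ j, H.rsmul u (H.innerR (w j) (z j) * H.innerR s v) := by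
        rw [← H.rsmul_sum, ← Finset.sum_mul, hwz, one_mul]
    _ = ∑ j, H.rsmul (H.rsmul (z j) (H.innerR (w j) v)) (H.innerR s u) :=
        Finset.sum_congr rfl fun j _ => by
          rw [H.rsmul_innerR_mul_innerR_comm, H.rsmul_mul, mul_comm]
    _ = H.rsmul (H.lsmul (∑ j, H.innerL (z j) (w j)) v) (H.innerR s u) := by
        rw [H.sum_innerL_lsmul, H.sum_rsmul]

lemma sum_innerL_lsmul_eq_self (hwz : ∑ j, H.innerR (w j) (z j) = 1) (v : M) :
    H.lsmul (∑ j, H.innerL (z j) (w j)) v = v := by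
  set αv := H.lsmul (∑ j, H.innerL (z j) (w j)) v
  set x := αv - v
  refine sub_eq_zero.mp (H.eq_zero_of_innerR_self_mul_self_eq_zero ?_)
  have h := congrArg (H.innerR x) (H.rsmul_innerR_eq_of_sum_innerR_eq_one w z hwz x x v)
  rw [H.innerR_rsmul_right, H.innerR_rsmul_right, mul_comm] at h
  calc H.innerR x x * H.innerR x x = (H.innerR x αv - H.innerR x v) * H.innerR x x := by
        rw [← H.innerR_sub_right]
    _ = 0 := by rw [sub_mul, h, sub_self]

end Commutative

end ImprimitivityBimodule

/-- For an imprimitivity Hilbert C*-bimodule `M` over commutative unital C*-algebras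
`A` and `B`, and finite families `wⱼ, zⱼ ∈ M` with `Σⱼ⟨wⱼ,zⱼ⟩_B = 1_B`, the element
`α := Σⱼ⟨zⱼ,wⱼ⟩_A` is Hermitian, positive, of norm at most `1`, invertible with a
positive inverse of norm at most `1`; consequently `α = 1_A`. -/
theorem canonical_element_eq_one
    {A B M : Type*} [CommCStarAlgebra A] [CommCStarAlgebra B]
    [AddCommGroup M] [Module ℂ M]
    (H : ImprimitivityBimodule A B M)
    {n : ℕ} (w z : Fin n → M)
    (hwz : (∑ j, H.innerR (w j) (z j)) = 1)
    (α : A) (hα : α = ∑ j, H.innerL (z j) (w j)) :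
    IsSelfAdjoint α ∧
    (∃ c : A, α = star c * c) ∧
    ‖α‖ ≤ 1 ∧
    (∃ γ : A, α * γ = 1 ∧ γ * α = 1 ∧ (∃ d : A, γ = star d * d) ∧ ‖γ‖ ≤ 1) ∧
    α = 1 := by
  obtain rfl : α = 1 := by
    rw [hα]
    exact H.eq_one_of_lsmul_eq_self (H.sum_innerL_lsmul_eq_self w z hwz)
  have norm_one_le : ‖(1 : A)‖ ≤ 1 := by
    nontriviality A
    exact norm_one.le
  exact ⟨.one A, ⟨1, by simp⟩, norm_one_le, ⟨1, one_mul 1, one_mul 1, ⟨1, by simp⟩, norm_one_le⟩, rfl⟩
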